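/- arXiv:1901.08179 — 10 statements merged into one kernel-verified Lean document; each statement's English description precedes it below -/
import Mathlib

section
/- Let $w \in \mathbb{R}^d$ be a unit vector, $C$ a $d \times d$ real symmetric matrix, and $P = I - w w^T$. Then $\|PC - CP\|^2 = w^T C^2 w - (w^T C w)^2$, where $\|\cdot\|$ is the spectral norm. -/
open Matrix

noncomputable def specNorm {d : ℕ} (M : Matrix (Fin d) (Fin d) ℝ) : ℝ :=
  ‖(Matrix.toEuclideanCLM (𝕜 := ℝ) M :
      EuclideanSpace ℝ (Fin d) →L[ℝ] EuclideanSpace ℝ (Fin d))‖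

private lemma dot_self_nonneg {d : ℕ} (z : Fin d → ℝ) : 0 ≤ z ⬝ᵥ z :=
  Finset.sum_nonneg fun _ _ => mul_self_nonneg _

private lemma norm_symm_sq {d : ℕ} (z : Fin d → ℝ) :
    ‖(WithLp.equiv 2 (Fin d → ℝ)).symm z‖ ^ 2 = z ⬝ᵥ z := by
  rw [EuclideanSpace.norm_eq, Real.sq_sqrt (by positivity)]
  simp [dotProduct, sq, Real.norm_eq_abs, abs_mul_abs_self]

private lemma dot_cs {d : ℕ} (u z : Fin d → ℝ) : (u ⬝ᵥ z) ^ 2 ≤ (u ⬝ᵥ u) * (z ⬝ᵥ z) := by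
  have := Finset.sum_mul_sq_le_sq_mul_sq Finset.univ u z
  simpa [dotProduct, sq] using this

private lemma vecMulVec_mulVec' {d : ℕ} (w x : Fin d → ℝ) :
    (vecMulVec w w).mulVec x = (w ⬝ᵥ x) • w := by
  ext i
  simp only [vecMulVec_apply, mulVec, dotProduct, Pi.smul_apply, smul_eq_mul,
    Finset.sum_mul, Finset.mul_sum]
  exact Finset.sum_congr rfl fun j _ => by ring

theorem stmt_1 {d : ℕ} (w : Fin d → ℝ) (hw : w ⬝ᵥ w = 1)
    (C : Matrix (Fin d) (Fin d) ℝ) (hC : C.IsSymm)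
    (P : Matrix (Fin d) (Fin d) ℝ) (hP : P = 1 - Matrix.vecMulVec w w) :
    specNorm (P * C - C * P) ^ 2 = w ⬝ᵥ (C * C).mulVec w - (w ⬝ᵥ C.mulVec w) ^ 2 := by
  classical
  set α : ℝ := w ⬝ᵥ C.mulVec w with hα
  set v : Fin d → ℝ := C.mulVec w - α • w with hv
  have hsymm : ∀ x : Fin d → ℝ, w ⬝ᵥ C.mulVec x = C.mulVec w ⬝ᵥ x := fun x => by
    rw [dotProduct_mulVec, ← mulVec_transpose, hC.eq]
  have hCw : C.mulVec w = v + α • w := by rw [hv]; ring_nf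
  have hwv : w ⬝ᵥ v = 0 := by
    rw [hv, dotProduct_sub, dotProduct_smul, hw, smul_eq_mul, mul_one, ← hα, sub_self]
  have hvw : v ⬝ᵥ w = 0 := by rw [dotProduct_comm]; exact hwv
  set s : ℝ := v ⬝ᵥ v with hs
  have hs0 : 0 ≤ s := dot_self_nonneg v
  -- s equals the RHS
  have hsRHS : s = w ⬝ᵥ (C * C).mulVec w - α ^ 2 := by
    have h1 : w ⬝ᵥ (C * C).mulVec w = C.mulVec w ⬝ᵥ C.mulVec w := by
      rw [← mulVec_mulVec, hsymm]
    rw [hs, hv, h1]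
    simp only [dotProduct_sub, sub_dotProduct, dotProduct_smul, smul_dotProduct,
      smul_eq_mul]
    have h2 : C.mulVec w ⬝ᵥ w = α := by rw [dotProduct_comm, ← hα]
    have h3 : w ⬝ᵥ C.mulVec w = α := hα.symm
    rw [h2, h3, hw]
    ring
  -- action of the commutator
  have hA : ∀ x : Fin d → ℝ,
      (P * C - C * P).mulVec x = (w ⬝ᵥ x) • v - (v ⬝ᵥ x) • w := by
    intro x
    have e1 : (P * C - C * P) = C * vecMulVec w w - vecMulVec w w * C := by
      rw [hP]; noncomm_ring
    have e2 : (vecMulVec w w).mulVec (C.mulVec x) = (C.mulVec w ⬝ᵥ x) • w := by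
      rw [vecMulVec_mulVec', hsymm]
    rw [e1, sub_mulVec, ← mulVec_mulVec, ← mulVec_mulVec, vecMulVec_mulVec', e2,
      mulVec_smul, hCw]
    ext i
    simp only [Pi.sub_apply, Pi.smul_apply, Pi.add_apply, smul_eq_mul, add_dotProduct,
      smul_dotProduct]
    ring
  set T := (Matrix.toEuclideanCLM (𝕜 := ℝ) (P * C - C * P) :
      EuclideanSpace ℝ (Fin d) →L[ℝ] EuclideanSpace ℝ (Fin d)) with hT
  have hTx : ∀ x : Fin d → ℝ,
      T ((WithLp.equiv 2 (Fin d → ℝ)).symm x) =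
        (WithLp.equiv 2 (Fin d → ℝ)).symm ((w ⬝ᵥ x) • v - (v ⬝ᵥ x) • w) := by
    intro x
    rw [hT, ← hA]; rfl
  -- squared norm of T applied to x
  have hTnormsq : ∀ x : Fin d → ℝ,
      ‖T ((WithLp.equiv 2 (Fin d → ℝ)).symm x)‖ ^ 2
        = s * (w ⬝ᵥ x) ^ 2 + (v ⬝ᵥ x) ^ 2 := by
    intro x
    rw [hTx, norm_symm_sq]
    set a := w ⬝ᵥ x
    set b := v ⬝ᵥ x
    simp only [dotProduct_sub, sub_dotProduct, dotProduct_smul, smul_dotProduct,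
      smul_eq_mul]
    rw [dotProduct_comm w v] at *
    rw [hwv, hw, ← hs]
    ring
  -- key inequality : s * a^2 + b^2 ≤ s * (x ⬝ x)
  have hkey : ∀ x : Fin d → ℝ,
      s * (w ⬝ᵥ x) ^ 2 + (v ⬝ᵥ x) ^ 2 ≤ s * (x ⬝ᵥ x) := by
    intro x
    set a := w ⬝ᵥ x with ha
    set b := v ⬝ᵥ x with hb
    set Q : ℝ := s * a ^ 2 + b ^ 2 with hQ
    have hQ0 : 0 ≤ Q := by positivity
    set u : Fin d → ℝ := (s * a) • w + b • v with hu
    have huz : u ⬝ᵥ x = Q := by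
      rw [hu, add_dotProduct, smul_dotProduct, smul_dotProduct, smul_eq_mul,
        smul_eq_mul, ← ha, ← hb, hQ]; ring
    have huu : u ⬝ᵥ u = s * Q := by
      rw [hu]
      simp only [add_dotProduct, dotProduct_add, smul_dotProduct, dotProduct_smul,
        smul_eq_mul]
      rw [hw, hwv, hvw, ← hs, hQ]
      ring
    have hcs := dot_cs u x
    rw [huz, huu] at hcs
    rcases eq_or_lt_of_le hQ0 with h0 | h0
    · rw [← h0]
      exact mul_nonneg hs0 (dot_self_nonneg x)
    · have : Q * Q ≤ (s * (x ⬝ᵥ x)) * Q := by nlinarith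
      exact le_of_mul_le_mul_right this h0
  -- the norm of T is √s
  set c : ℝ := Real.sqrt s with hc
  have hc0 : 0 ≤ c := Real.sqrt_nonneg s
  have hub : ‖T‖ ≤ c := by
    apply ContinuousLinearMap.opNorm_le_bound _ hc0
    intro x
    have hx : x = (WithLp.equiv 2 (Fin d → ℝ)).symm ((WithLp.equiv 2 (Fin d → ℝ)) x) := rfl
    set z := (WithLp.equiv 2 (Fin d → ℝ)) x with hz
    rw [hx]
    have h1 := hTnormsq z
    have h2 := hkey z
    have h3 : ‖(WithLp.equiv 2 (Fin d → ℝ)).symm z‖ ^ 2 = z ⬝ᵥ z := norm_symm_sq z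
    have h4 : ‖T ((WithLp.equiv 2 (Fin d → ℝ)).symm z)‖ ^ 2
        ≤ (c * ‖(WithLp.equiv 2 (Fin d → ℝ)).symm z‖) ^ 2 := by
      rw [h1, mul_pow, hc, Real.sq_sqrt hs0, h3]
      exact h2
    have h5 : 0 ≤ c * ‖(WithLp.equiv 2 (Fin d → ℝ)).symm z‖ :=
      mul_nonneg hc0 (norm_nonneg _)
    exact (abs_le_of_sq_le_sq' h4 h5).2
  have hlb : c ≤ ‖T‖ := by
    have h1 : T ((WithLp.equiv 2 (Fin d → ℝ)).symm w)
        = (WithLp.equiv 2 (Fin d → ℝ)).symm v := by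
      rw [hTx, hw, hvw]
      simp
    have h2 : ‖(WithLp.equiv 2 (Fin d → ℝ)).symm w‖ = 1 := by
      have := norm_symm_sq w
      rw [hw] at this
      nlinarith [norm_nonneg ((WithLp.equiv 2 (Fin d → ℝ)).symm w)]
    have h3 : ‖(WithLp.equiv 2 (Fin d → ℝ)).symm v‖ = c := by
      have := norm_symm_sq v
      rw [← hs] at this
      rw [hc, ← this, Real.sqrt_sq (norm_nonneg _)]
    have := T.le_opNorm ((WithLp.equiv 2 (Fin d → ℝ)).symm w)
    rw [h1, h2, h3, mul_one] at this
    exact this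
  have hTs : ‖T‖ = c := le_antisymm hub hlb
  have : specNorm (P * C - C * P) = c := hTs
  rw [this, hc, Real.sq_sqrt hs0, hsRHS]
end

section
/- Let $C$ be a positive semi-definite $d \times d$ real matrix with largest eigenvalue $\lambda_1$ and corresponding unit eigenvector $u_1$. Then for any unit vector $w \in \mathbb{R}^d$, $w^T C^2 w - (w^T C w)^2 \leq 2 \lambda_1^2 (1 - (u_1^T w)^2)$. -/
open Matrix

theorem stmt_2 {d : ℕ} (C : Matrix (Fin d) (Fin d) ℝ) (hC : C.PosSemidef)
    (lam1 : ℝ) (u1 : Fin d → ℝ) (hu1 : u1 ⬝ᵥ u1 = 1)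
    (heig : C.mulVec u1 = lam1 • u1)
    (hmax : ∀ v : Fin d → ℝ, v ⬝ᵥ C.mulVec v ≤ lam1 * (v ⬝ᵥ v))
    (w : Fin d → ℝ) (hw : w ⬝ᵥ w = 1) :
    w ⬝ᵥ (C * C).mulVec w - (w ⬝ᵥ C.mulVec w) ^ 2 ≤ 2 * lam1 ^ 2 * (1 - (u1 ⬝ᵥ w) ^ 2) := by
  have hsymm : ∀ x y : Fin d → ℝ, x ⬝ᵥ C.mulVec y = C.mulVec x ⬝ᵥ y := by
    intro x y
    rw [dotProduct_mulVec, ← mulVec_transpose,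
      ← conjTranspose_eq_transpose_of_trivial, hC.isHermitian.eq]
  set α := u1 ⬝ᵥ w with hα
  set t := w ⬝ᵥ C.mulVec w with ht
  -- λ1 ≥ 0
  have hCu : u1 ⬝ᵥ C.mulVec u1 = lam1 := by
    rw [heig, dotProduct_smul, hu1]; simp
  have hlam0 : 0 ≤ lam1 := by
    have := hC.dotProduct_mulVec_nonneg u1; simp only [star_trivial] at this; linarith
  -- t ≥ 0 and t ≤ λ1
  have ht0 : 0 ≤ t := by have := hC.dotProduct_mulVec_nonneg w; simpa using this
  have ht1 : t ≤ lam1 := by have := hmax w; rwa [hw, mul_one] at this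
  -- u1 · C w = λ1 α
  have hu1Cw : u1 ⬝ᵥ C.mulVec w = lam1 * α := by
    rw [hsymm, heig, smul_dotProduct]; rfl
  -- t ≥ λ1 α² : from r = w - α u1, r·Cr ≥ 0
  have hr : 0 ≤ t - lam1 * α ^ 2 := by
    have h := hC.dotProduct_mulVec_nonneg (w - α • u1)
    simp only [star_trivial] at h
    have h1 : w ⬝ᵥ C.mulVec u1 = lam1 * α := by rw [hsymm, dotProduct_comm]; exact hu1Cw
    have hexp : (w - α • u1) ⬝ᵥ C.mulVec (w - α • u1) = t - lam1 * α ^ 2 := by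
      simp only [mulVec_sub, mulVec_smul, sub_dotProduct, dotProduct_sub,
        smul_dotProduct, dotProduct_smul, h1, hu1Cw, hCu, smul_eq_mul, ht]
      ring
    rwa [hexp] at h
  -- α² ≤ 1
  have hα1 : α ^ 2 ≤ 1 := by
    have h : 0 ≤ (w - α • u1) ⬝ᵥ (w - α • u1) :=
      Finset.sum_nonneg fun i _ => mul_self_nonneg _
    have hwu : w ⬝ᵥ u1 = α := dotProduct_comm w u1
    simp only [sub_dotProduct, dotProduct_sub, smul_dotProduct,
      dotProduct_smul, hw, hwu, ← hα, hu1, smul_eq_mul] at h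
    nlinarith [h]
  -- w · C² w ≤ λ1 t via sqrt
  have hCC : w ⬝ᵥ (C * C).mulVec w ≤ lam1 * t := by
    obtain ⟨S, hS⟩ : ∃ S : Matrix (Fin d) (Fin d) ℝ, S * S = C ∧ Sᵀ = S := by
      open scoped MatrixOrder in
      exact ⟨CFC.sqrt C, CFC.sqrt_mul_sqrt_self C hC.nonneg, by
        rw [← conjTranspose_eq_transpose_of_trivial]; exact (CFC.sqrt_nonneg C).posSemidef.isHermitian.eq⟩
    have hSS : S * S = C := hS.1
    have hSsym : Sᵀ = S := hS.2
    have key : (C * C).mulVec w = S.mulVec (C.mulVec (S.mulVec w)) := by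
      rw [← hSS]
      simp [← mulVec_mulVec, Matrix.mul_assoc]
    have hSd : ∀ x y : Fin d → ℝ, x ⬝ᵥ S.mulVec y = S.mulVec x ⬝ᵥ y := by
      intro x y
      rw [dotProduct_mulVec, ← mulVec_transpose, hSsym]
    calc w ⬝ᵥ (C * C).mulVec w = (S.mulVec w) ⬝ᵥ C.mulVec (S.mulVec w) := by
          rw [key, hSd]
      _ ≤ lam1 * ((S.mulVec w) ⬝ᵥ (S.mulVec w)) := hmax _
      _ = lam1 * t := by
          congr 1
          rw [← hSd, mulVec_mulVec, hSS]
  nlinarith [hr, hα1, ht0, ht1, hlam0, hCC, mul_nonneg hlam0 (sub_nonneg.2 hα1),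
    mul_nonneg (sub_nonneg.2 ht1) hr]
end

section
/- Let $p_t(\alpha,\beta)$ satisfy $p_0 = 1$, $p_1 = \alpha/4$, $p_2 = (\alpha/2-\beta)^2$, and $p_t = (\alpha-\beta)p_{t-1} - \beta(\alpha-\beta)p_{t-2} + \beta^3 p_{t-3}$ for $t \geq 3$. If $0 \leq 4\beta < \alpha$, then for all $t \geq 0$, $p_t(\alpha,\beta) = \big[ \tfrac{1}{2}(\tfrac{\sqrt{\alpha}}{2} + \tfrac{\sqrt{\alpha - 4\beta}}{2})^t + \tfrac{1}{2}(\tfrac{\sqrt{\alpha}}{2} - \tfrac{\sqrt{\alpha - 4\beta}}{2})^t \big]^2$. -/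
/-!
Write `u, v = (√α ± √(α - 4β)) / 2`, the roots of `x² - √α x + β`, so that `u + v = √α` and
`u v = β`. The squares `(a uᵗ + b vᵗ)²` are combinations of `(u²)ᵗ`, `(uv)ᵗ` and `(v²)ᵗ`, hence
solve the linear recurrence whose characteristic polynomial is
`(x - u²)(x - uv)(x - v²) = x³ - (α - β) x² + β (α - β) x - β³`.
The right-hand side with `a = b = 1/2` matches `p` at `t = 0, 1, 2`, so the two solutions agree.
-/

namespace LinearRecurrence

variable {R : Type*} [CommRing R]

def squaredPowSum (α β : R) : LinearRecurrence R :=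
  ⟨3, ![β ^ 3, -(β * (α - β)), α - β]⟩

theorem isSolution_squaredPowSum_iff (α β : R) (p : ℕ → R) :
    (squaredPowSum α β).IsSolution p ↔
      ∀ t, p (t + 3) = (α - β) * p (t + 2) - β * (α - β) * p (t + 1) + β ^ 3 * p t := by
  refine forall_congr' fun t ↦ ?_
  change p (t + 3) = ∑ i : Fin 3, ![β ^ 3, -(β * (α - β)), α - β] i * p (t + i) ↔ _
  simp only [Fin.sum_univ_three, Matrix.cons_val, Fin.val_zero, Fin.val_one, Fin.val_two, add_zero]
  constructor <;> intro h <;> rw [h] <;> ring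

theorem isSolution_squaredPowSum_sq_add_pow {α β u v : R} (hα : (u + v) ^ 2 = α)
    (hβ : u * v = β) (a b : R) :
    (squaredPowSum α β).IsSolution fun t ↦ (a * u ^ t + b * v ^ t) ^ 2 := by
  rw [isSolution_squaredPowSum_iff]
  intro t
  subst hα hβ
  ring

end LinearRecurrence

open LinearRecurrence in
theorem stmt_6 (α β : ℝ) (hβ : 0 ≤ β) (hαβ : 4 * β < α)
    (p : ℕ → ℝ)
    (hp0 : p 0 = 1) (hp1 : p 1 = α / 4) (hp2 : p 2 = (α / 2 - β) ^ 2)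
    (hprec : ∀ t, p (t + 3) =
      (α - β) * p (t + 2) - β * (α - β) * p (t + 1) + β ^ 3 * p t) :
    ∀ t, p t =
      ((1 / 2) * (Real.sqrt α / 2 + Real.sqrt (α - 4 * β) / 2) ^ t +
       (1 / 2) * (Real.sqrt α / 2 - Real.sqrt (α - 4 * β) / 2) ^ t) ^ 2 := by
  set u := Real.sqrt α / 2 + Real.sqrt (α - 4 * β) / 2
  set v := Real.sqrt α / 2 - Real.sqrt (α - 4 * β) / 2
  have hsqrt_α := Real.sq_sqrt (by linarith : 0 ≤ α)
  have hsqrt_disc := Real.sq_sqrt (by linarith : 0 ≤ α - 4 * β)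
  have hsum : (u + v) ^ 2 = α := by rw [← hsqrt_α]; ring
  have hprod : u * v = β := by linear_combination hsqrt_α / 4 - hsqrt_disc / 4
  have hsol := isSolution_squaredPowSum_sq_add_pow hsum hprod (1 / 2) (1 / 2)
  have hsum_sq : (1 / 2) * u ^ 2 + (1 / 2) * v ^ 2 = α / 2 - β := by
    linear_combination hsum / 2 - hprod
  refine congrFun <| ((squaredPowSum α β).eq_iff_eqOn_range_order _ _
    ((isSolution_squaredPowSum_iff α β p).mpr hprec) hsol).mpr ?_
  intro n hn
  simp only [Finset.coe_range, Set.mem_Iio, squaredPowSum] at hn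
  interval_cases n
  · rw [hp0]; norm_num
  · rw [hp1, ← hsum]; ring
  · rw [hp2, ← hsum_sq]
end

section
/- Let $q_t(\alpha,\beta)$ satisfy $q_0 = 1$, $q_1 = \alpha$, $q_2 = (\alpha-\beta)^2$, and $q_t = (\alpha-\beta)q_{t-1} - \beta(\alpha-\beta)q_{t-2} + \beta^3 q_{t-3}$ for $t \geq 3$. If $0 \leq 4\beta < \alpha$, then for all $t \geq 0$, $q_t(\alpha,\beta) = \frac{1}{\alpha - 4\beta}\big[ (\tfrac{\sqrt{\alpha}}{2} + \tfrac{\sqrt{\alpha-4\beta}}{2})^{t+1} - (\tfrac{\sqrt{\alpha}}{2} - \tfrac{\sqrt{\alpha-4\beta}}{2})^{t+1} \big]^2 \geq 0$. -/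
/-!
With `a, b = √α / 2 ± √(α - 4β) / 2` we have `(a + b)² = α`, `a b = β` and `(a - b)² = α - 4β`.
The Lucas sequence `u t = (a^(t+1) - b^(t+1)) / (a - b)` satisfies `u (t+2) = (a+b) u (t+1) - a b u t`,
and the squares of any solution of `u (t+2) = P u (t+1) - Q u t` satisfy the third-order recurrence
with coefficients `P² - Q`, `-Q (P² - Q)`, `Q³`. So `u²` and `q` solve the same recurrence with the
same initial values `1, α, (α - β)²`, hence coincide, which gives both the closed form and `q t ≥ 0`.
-/

theorem eq_of_recurrence_three {R : Type*} (F : R → R → R → R) {u v : ℕ → R}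
    (hu : ∀ n, u (n + 3) = F (u n) (u (n + 1)) (u (n + 2)))
    (hv : ∀ n, v (n + 3) = F (v n) (v (n + 1)) (v (n + 2)))
    (h0 : u 0 = v 0) (h1 : u 1 = v 1) (h2 : u 2 = v 2) : u = v := by
  funext n
  induction n using Nat.strong_induction_on with
  | _ n ih =>
    match n with
    | 0 => exact h0
    | 1 => exact h1
    | 2 => exact h2
    | k + 3 => rw [hu, hv, ih k (by omega), ih (k + 1) (by omega), ih (k + 2) (by omega)]

theorem sq_recurrence_of_recurrence {R : Type*} [CommRing R] (P Q : R) {u : ℕ → R}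
    (hu : ∀ n, u (n + 2) = P * u (n + 1) - Q * u n) (n : ℕ) :
    u (n + 3) ^ 2 =
      (P ^ 2 - Q) * u (n + 2) ^ 2 - Q * (P ^ 2 - Q) * u (n + 1) ^ 2 + Q ^ 3 * u n ^ 2 := by
  have h3 : u (n + 3) = P * u (n + 2) - Q * u (n + 1) := hu (n + 1)
  rw [h3, hu n]
  ring

section Lucas

variable {K : Type*} [Field K] (a b : K)

def lucasU (t : ℕ) : K := (a ^ (t + 1) - b ^ (t + 1)) / (a - b)

theorem lucasU_zero (hab : a ≠ b) : lucasU a b 0 = 1 := by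
  simp only [lucasU, zero_add, pow_one]
  exact div_self (sub_ne_zero.2 hab)

theorem lucasU_one (hab : a ≠ b) : lucasU a b 1 = a + b := by
  have hsub : a - b ≠ 0 := sub_ne_zero.2 hab
  simp only [lucasU]
  field_simp
  ring

theorem lucasU_add_two (n : ℕ) :
    lucasU a b (n + 2) = (a + b) * lucasU a b (n + 1) - a * b * lucasU a b n := by
  simp only [lucasU]
  ring

end Lucas

theorem stmt_7 (α β : ℝ) (hβ : 0 ≤ β) (hαβ : 4 * β < α)
    (q : ℕ → ℝ)
    (hq0 : q 0 = 1) (hq1 : q 1 = α) (hq2 : q 2 = (α - β) ^ 2)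
    (hqrec : ∀ t, q (t + 3) =
      (α - β) * q (t + 2) - β * (α - β) * q (t + 1) + β ^ 3 * q t) :
    ∀ t, q t =
      (1 / (α - 4 * β)) *
        ((Real.sqrt α / 2 + Real.sqrt (α - 4 * β) / 2) ^ (t + 1) -
         (Real.sqrt α / 2 - Real.sqrt (α - 4 * β) / 2) ^ (t + 1)) ^ 2 ∧
      0 ≤ q t := by
  set a := Real.sqrt α / 2 + Real.sqrt (α - 4 * β) / 2
  set b := Real.sqrt α / 2 - Real.sqrt (α - 4 * β) / 2
  have hα : Real.sqrt α ^ 2 = α := Real.sq_sqrt (by linarith)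
  have hδ : Real.sqrt (α - 4 * β) ^ 2 = α - 4 * β := Real.sq_sqrt (by linarith)
  have hsum : (a + b) ^ 2 = α := by linear_combination hα
  have hprod : a * b = β := by linear_combination hα / 4 - hδ / 4
  have hdiff : (a - b) ^ 2 = α - 4 * β := by linear_combination hδ
  have hab : a ≠ b := by
    intro h
    rw [h, sub_self] at hdiff
    linarith
  have hu2 : lucasU a b 2 = α - β := by
    rw [← hsum, ← hprod, lucasU_add_two, lucasU_zero a b hab, lucasU_one a b hab]
    ring
  have hq : q = fun t => lucasU a b t ^ 2 := by
    refine eq_of_recurrence_three (fun x y z => (α - β) * z - β * (α - β) * y + β ^ 3 * x)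
      hqrec (fun n => ?_) ?_ ?_ ?_
    · simpa only [hsum, hprod] using
        sq_recurrence_of_recurrence (a + b) (a * b) (lucasU_add_two a b) n
    · simp [hq0, lucasU_zero a b hab]
    · simp [hq1, lucasU_one a b hab, hsum]
    · simp [hq2, hu2]
  intro t
  subst hq
  refine ⟨?_, sq_nonneg _⟩
  simp only [lucasU, div_pow, hdiff]
  ring
end

section
/- Let $p_t(\alpha,\beta)$ be as in the recurrence $p_0=1$, $p_1=\alpha/4$, $p_2 = (\alpha/2-\beta)^2$, $p_t = (\alpha-\beta)p_{t-1} - \beta(\alpha-\beta)p_{t-2} + \beta^3 p_{t-3}$. If $0 \leq 4\beta < \alpha$, then for all $t \geq 1$: $p_t(\alpha,\beta) > \beta^t = p_t(4\beta,\beta) \geq 0$. -/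
/-!
The characteristic polynomial of the recurrence factors as
`(x - β) (x² - (α - 2β) x + β²)`; for `α = 4β` it is `(x - β)³`, whence `p_t(4β, β) = β^t`.
The first differences `q_t = p_{t+1} - β p_t` satisfy `q_{t+2} = (α - 2β) q_{t+1} - β² q_t`.
Since `α - 2β > 2β`, the invariant `q_{t+1} ≥ (α - 3β) q_t > 0` propagates: it gives
`β q_{t+1} ≥ β² q_t`, i.e. `q_{t+2} ≥ (α - 3β) q_{t+1}`. Hence `p_{t+1} > β p_t`, and
`p_t > β^t` for `t ≥ 1` follows by induction.
-/

theorem eq_of_three_term_recurrence {R : Type*} {u v : ℕ → R} (f : R → R → R → R)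
    (hu : ∀ t, u (t + 3) = f (u t) (u (t + 1)) (u (t + 2)))
    (hv : ∀ t, v (t + 3) = f (v t) (v (t + 1)) (v (t + 2)))
    (h0 : u 0 = v 0) (h1 : u 1 = v 1) (h2 : u 2 = v 2) : u = v := by
  have h : ∀ t, u t = v t ∧ u (t + 1) = v (t + 1) ∧ u (t + 2) = v (t + 2) := by
    intro t
    induction t with
    | zero => exact ⟨h0, h1, h2⟩
    | succ t ih =>
      obtain ⟨e0, e1, e2⟩ := ih
      exact ⟨e1, e2, show u (t + 3) = v (t + 3) by rw [hu, hv, e0, e1, e2]⟩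
  funext t
  exact (h t).1

theorem sub_mul_shift_recurrence {R : Type*} [CommRing R] {α β : R} {p : ℕ → R}
    (hp : ∀ t, p (t + 3) = (α - β) * p (t + 2) - β * (α - β) * p (t + 1) + β ^ 3 * p t) (t : ℕ) :
    p (t + 3) - β * p (t + 2) =
      (α - 2 * β) * (p (t + 2) - β * p (t + 1)) - β ^ 2 * (p (t + 1) - β * p t) := by
  rw [hp]
  ring

theorem pos_of_two_term_recurrence {a b : ℝ} {s : ℕ → ℝ} (hb : 0 ≤ b) (hab : 2 * b < a)
    (hs : ∀ t, s (t + 2) = a * s (t + 1) - b ^ 2 * s t)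
    (hs0 : 0 < s 0) (hs1 : (a - b) * s 0 ≤ s 1) (t : ℕ) : 0 < s t := by
  have h : ∀ t, 0 < s t ∧ (a - b) * s t ≤ s (t + 1) := by
    intro t
    induction t with
    | zero => exact ⟨hs0, hs1⟩
    | succ t ih =>
      obtain ⟨hpos, hstep⟩ := ih
      have hb_le : b * s t ≤ s (t + 1) := by nlinarith
      refine ⟨by nlinarith, ?_⟩
      rw [hs]
      nlinarith
  exact (h t).1

theorem pow_succ_lt_of_mul_lt_succ {β : ℝ} {p : ℕ → ℝ} (hβ : 0 ≤ β) (h0 : 1 ≤ p 0)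
    (h : ∀ t, β * p t < p (t + 1)) (t : ℕ) : β ^ (t + 1) < p (t + 1) := by
  have hle : ∀ t, β ^ t ≤ p t := by
    intro t
    induction t with
    | zero => simpa using h0
    | succ t ih =>
      calc β ^ (t + 1) = β * β ^ t := pow_succ' β t
        _ ≤ β * p t := mul_le_mul_of_nonneg_left ih hβ
        _ ≤ p (t + 1) := (h t).le
  calc β ^ (t + 1) = β * β ^ t := pow_succ' β t
    _ ≤ β * p t := mul_le_mul_of_nonneg_left (hle t) hβ
    _ < p (t + 1) := h t

theorem stmt_8 (α β : ℝ) (hβ : 0 ≤ β) (hαβ : 4 * β < α)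
    (p : ℕ → ℝ)
    (hp0 : p 0 = 1) (hp1 : p 1 = α / 4) (hp2 : p 2 = (α / 2 - β) ^ 2)
    (hprec : ∀ t, p (t + 3) =
      (α - β) * p (t + 2) - β * (α - β) * p (t + 1) + β ^ 3 * p t)
    (p' : ℕ → ℝ)
    (hp'0 : p' 0 = 1) (hp'1 : p' 1 = 4 * β / 4) (hp'2 : p' 2 = (4 * β / 2 - β) ^ 2)
    (hp'rec : ∀ t, p' (t + 3) =
      (4 * β - β) * p' (t + 2) - β * (4 * β - β) * p' (t + 1) + β ^ 3 * p' t) :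
    ∀ t, 1 ≤ t → p' t = β ^ t ∧ β ^ t < p t ∧ (0 : ℝ) ≤ β ^ t := by
  have hp' : p' = (β ^ ·) :=
    eq_of_three_term_recurrence (fun x y z => (4 * β - β) * z - β * (4 * β - β) * y + β ^ 3 * x)
      hp'rec (fun t => by ring) (by simp [hp'0]) (by simp [hp'1]) (by rw [hp'2]; ring)
  have hdiff : ∀ t, 0 < p (t + 1) - β * p t :=
    pos_of_two_term_recurrence (a := α - 2 * β) hβ (by linarith) (sub_mul_shift_recurrence hprec)
      (show 0 < p 1 - β * p 0 by rw [hp0, hp1]; linarith)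
      -- the two sides differ by `β (α - 4β) / 2`
      (show (α - 2 * β - β) * (p 1 - β * p 0) ≤ p 2 - β * p 1 by rw [hp0, hp1, hp2]; nlinarith)
  have hgt := pow_succ_lt_of_mul_lt_succ hβ hp0.ge (fun t => sub_pos.mp (hdiff t))
  intro t ht
  obtain ⟨s, rfl⟩ := Nat.exists_eq_add_of_le' ht
  exact ⟨congrFun hp' _, hgt s, pow_nonneg hβ _⟩
end

section
/- Let $p_t$ and $q_t$ be the recurrences $p_0=1, p_1=\alpha/4, p_2=(\alpha/2-\beta)^2$ and $q_0=1, q_1=\alpha, q_2=(\alpha-\beta)^2$, both satisfying $x_t = (\alpha-\beta)x_{t-1} - \beta(\alpha-\beta)x_{t-2} + \beta^3 x_{t-3}$ for $t \geq 3$. If $0 \leq \alpha < 4\beta$, then for all $t \geq 0$: $p_t(\alpha,\beta) \leq \beta^t$ and $q_t(\alpha,\beta) \leq (t+1)^2 \beta^t$. -/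
lemma abs_sin_nat_mul_le (x : ℝ) : ∀ n : ℕ, |Real.sin (n * x)| ≤ n * |Real.sin x| := by
  intro n
  induction n with
  | zero => simp
  | succ n ih =>
    have h : ((n:ℝ) + 1) * x = (n:ℝ) * x + x := by ring
    push_cast
    rw [h, Real.sin_add]
    have h1 : |Real.sin ((n:ℝ)*x) * Real.cos x| ≤ |Real.sin ((n:ℝ)*x)| := by
      rw [abs_mul]; exact mul_le_of_le_one_right (abs_nonneg _) (Real.abs_cos_le_one x)
    have h2 : |Real.cos ((n:ℝ)*x) * Real.sin x| ≤ |Real.sin x| := by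
      rw [abs_mul]; exact mul_le_of_le_one_left (abs_nonneg _) (Real.abs_cos_le_one _)
    have h3 := abs_add_le (Real.sin ((n:ℝ)*x) * Real.cos x) (Real.cos ((n:ℝ)*x) * Real.sin x)
    push_cast at ih
    nlinarith [abs_nonneg (Real.sin x)]

theorem stmt_9 (α β : ℝ) (hα : 0 ≤ α) (hαβ : α < 4 * β)
    (p q : ℕ → ℝ)
    (hp0 : p 0 = 1) (hp1 : p 1 = α / 4) (hp2 : p 2 = (α / 2 - β) ^ 2)
    (hprec : ∀ t, p (t + 3) =
      (α - β) * p (t + 2) - β * (α - β) * p (t + 1) + β ^ 3 * p t)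
    (hq0 : q 0 = 1) (hq1 : q 1 = α) (hq2 : q 2 = (α - β) ^ 2)
    (hqrec : ∀ t, q (t + 3) =
      (α - β) * q (t + 2) - β * (α - β) * q (t + 1) + β ^ 3 * q t) :
    ∀ t, p t ≤ β ^ t ∧ q t ≤ ((t : ℝ) + 1) ^ 2 * β ^ t := by
  have hβ : 0 < β := by linarith
  set c : ℝ := (α - 2 * β) / (2 * β) with hc
  have hc1 : -1 ≤ c := by
    rw [hc, le_div_iff₀ (by linarith)]; linarith
  have hc2 : c < 1 := by
    rw [hc, div_lt_one (by linarith)]; linarith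
  set θ : ℝ := Real.arccos c with hθ
  have hcosθ : Real.cos θ = c := Real.cos_arccos hc1 hc2.le
  have hαc : α = 2 * β * (c + 1) := by
    rw [hc]
    field_simp
    ring
  have h1c : (1 : ℝ) - c ≠ 0 := by linarith
  -- cosine recurrence
  have key : ∀ s : ℝ, Real.cos (s * θ + 2 * θ) =
      2 * c * Real.cos (s * θ + θ) - Real.cos (s * θ) := by
    intro s
    have g1 : Real.cos (s * θ + 2 * θ) = Real.cos ((s * θ + θ) + θ) := by congr 1; ring
    have g2 : Real.cos (s * θ) = Real.cos ((s * θ + θ) - θ) := by congr 1; ring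
    rw [g1, g2, Real.cos_add, Real.cos_sub, hcosθ]
    ring
  have cos2 : Real.cos (2 * θ) = 2 * c ^ 2 - 1 := by
    rw [Real.cos_two_mul, hcosθ]
  have cos3 : Real.cos (3 * θ) = 4 * c ^ 3 - 3 * c := by
    have h := key 1
    have g1 : Real.cos (3 * θ) = Real.cos (1 * θ + 2 * θ) := by congr 1; ring
    have g2 : Real.cos (1 * θ + θ) = Real.cos (2 * θ) := by congr 1; ring
    have g3 : Real.cos (1 * θ) = Real.cos θ := by congr 1; ring
    rw [g1, h, g2, g3, cos2, hcosθ]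
    ring
  -- closed forms
  have main : ∀ t : ℕ, p t = β ^ t * ((1 + Real.cos ((t : ℝ) * θ)) / 2) ∧
      q t = β ^ t * ((1 - Real.cos (((t : ℝ) + 1) * θ)) / (1 - c)) := by
    intro t
    induction t using Nat.strong_induction_on with
    | _ t ih =>
      match t with
      | 0 =>
        refine ⟨?_, ?_⟩
        · rw [hp0]; norm_num
        · rw [hq0]
          norm_num
          rw [hcosθ]
          field_simp
      | 1 =>
        refine ⟨?_, ?_⟩
        · rw [hp1]
          norm_num
          rw [hcosθ, hαc]
          ring
        · rw [hq1]
          norm_num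
          rw [cos2, hαc]
          field_simp
          ring
      | 2 =>
        refine ⟨?_, ?_⟩
        · rw [hp2]
          norm_num
          rw [cos2, hαc]
          ring
        · rw [hq2]
          norm_num
          rw [cos3, hαc]
          field_simp
          ring
      | (t + 3) =>
        obtain ⟨hpt, hqt⟩ := ih t (by omega)
        obtain ⟨hpt1, hqt1⟩ := ih (t+1) (by omega)
        obtain ⟨hpt2, hqt2⟩ := ih (t+2) (by omega)
        have hab : α - β = β * (2 * c + 1) := by rw [hαc]; ring
        have e2 : Real.cos (((t:ℝ) + 2) * θ) =
            2 * c * Real.cos (((t:ℝ) + 1) * θ) - Real.cos ((t:ℝ) * θ) := by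
          have g1 : Real.cos (((t:ℝ)+2)*θ) = Real.cos ((t:ℝ)*θ + 2*θ) := by congr 1; ring
          have g2 : Real.cos ((t:ℝ)*θ + θ) = Real.cos (((t:ℝ)+1)*θ) := by congr 1; ring
          rw [g1, key, g2]
        have e3 : Real.cos (((t:ℝ) + 3) * θ) =
            2 * c * Real.cos (((t:ℝ) + 2) * θ) - Real.cos (((t:ℝ) + 1) * θ) := by
          have g1 : Real.cos (((t:ℝ)+3)*θ) = Real.cos (((t:ℝ)+1)*θ + 2*θ) := by congr 1; ring
          have g2 : Real.cos (((t:ℝ)+1)*θ + θ) = Real.cos (((t:ℝ)+2)*θ) := by congr 1; ring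
          have g3 : Real.cos (((t:ℝ)+1)*θ + 2*θ) =
              2 * c * Real.cos (((t:ℝ)+1)*θ + θ) - Real.cos (((t:ℝ)+1)*θ) := key _
          rw [g1, g3, g2]
        have e4 : Real.cos (((t:ℝ) + 4) * θ) =
            2 * c * Real.cos (((t:ℝ) + 3) * θ) - Real.cos (((t:ℝ) + 2) * θ) := by
          have g1 : Real.cos (((t:ℝ)+4)*θ) = Real.cos (((t:ℝ)+2)*θ + 2*θ) := by congr 1; ring
          have g2 : Real.cos (((t:ℝ)+2)*θ + θ) = Real.cos (((t:ℝ)+3)*θ) := by congr 1; ring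
          have g3 : Real.cos (((t:ℝ)+2)*θ + 2*θ) =
              2 * c * Real.cos (((t:ℝ)+2)*θ + θ) - Real.cos (((t:ℝ)+2)*θ) := key _
          rw [g1, g3, g2]
        refine ⟨?_, ?_⟩
        · rw [hprec t, hpt, hpt1, hpt2, hab]
          push_cast
          rw [e3, e2]
          ring
        · rw [hqrec t, hqt, hqt1, hqt2, hab]
          push_cast
          have r1 : (t:ℝ) + 1 + 1 = (t:ℝ) + 2 := by ring
          have r2 : (t:ℝ) + 2 + 1 = (t:ℝ) + 3 := by ring
          have r3 : (t:ℝ) + 3 + 1 = (t:ℝ) + 4 := by ring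
          rw [r3, r2, r1, e4, e3, e2]
          field_simp
          ring
  intro t
  obtain ⟨hpt, hqt⟩ := main t
  have hβt : (0:ℝ) ≤ β ^ t := by positivity
  constructor
  · rw [hpt]
    have h1 : (1 + Real.cos ((t:ℝ) * θ)) / 2 ≤ 1 := by
      have := Real.cos_le_one ((t:ℝ) * θ); linarith
    calc β ^ t * ((1 + Real.cos ((t:ℝ) * θ)) / 2) ≤ β ^ t * 1 :=
          mul_le_mul_of_nonneg_left h1 hβt
      _ = β ^ t := mul_one _
  · rw [hqt]
    have hsin : Real.sin (((t:ℝ)+1) * θ / 2) ^ 2 ≤ ((t:ℝ)+1)^2 * Real.sin (θ/2) ^ 2 := by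
      have h := abs_sin_nat_mul_le (θ/2) (t+1)
      push_cast at h
      have heq : ((t:ℝ)+1) * (θ/2) = ((t:ℝ)+1) * θ / 2 := by ring
      rw [heq] at h
      nlinarith [sq_abs (Real.sin (((t:ℝ)+1) * θ / 2)), sq_abs (Real.sin (θ/2)),
        abs_nonneg (Real.sin (θ/2)), abs_nonneg (Real.sin (((t:ℝ)+1) * θ / 2))]
    have hhalf1 : Real.sin (((t:ℝ)+1) * θ / 2) ^ 2 = (1 - Real.cos (((t:ℝ)+1)*θ)) / 2 := by
      have h := Real.sin_sq_eq_half_sub (((t:ℝ)+1) * θ / 2)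
      have g : 2 * (((t:ℝ)+1) * θ / 2) = ((t:ℝ)+1) * θ := by ring
      rw [g] at h
      rw [h]; ring
    have hhalf2 : Real.sin (θ / 2) ^ 2 = (1 - c) / 2 := by
      have h := Real.sin_sq_eq_half_sub (θ / 2)
      have g : 2 * (θ / 2) = θ := by ring
      rw [g, hcosθ] at h
      rw [h]; ring
    rw [hhalf1, hhalf2] at hsin
    have hkey : (1 - Real.cos (((t:ℝ)+1) * θ)) / (1 - c) ≤ ((t:ℝ)+1)^2 := by
      rw [div_le_iff₀ (by linarith)]
      nlinarith
    calc β ^ t * ((1 - Real.cos (((t:ℝ)+1) * θ)) / (1 - c)) ≤ β ^ t * ((t:ℝ)+1)^2 :=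
          mul_le_mul_of_nonneg_left hkey hβt
      _ = ((t:ℝ)+1)^2 * β^t := by ring
end

section
/- Let $(w_t)$ be real numbers satisfying $w_t = (\alpha-\beta)w_{t-1} - \beta(\alpha-\beta)w_{t-2} + \beta^3 w_{t-3} + L_{t-1} + \beta L_{t-2}$ for $t \geq 3$, with $w_0 = L_0$, $w_1 = \frac{\alpha}{4} L_0$, $w_2 = (\frac{\alpha}{2}-\beta)^2 L_0 + L_1$. Then for all $t \geq 1$, $w_t = p_t(\alpha,\beta) L_0 + \sum_{r=1}^{t-1} q_{t-r-1}(\alpha,\beta) L_r$, where $p_t, q_t$ are the recurrence polynomials $p_0=1, p_1=\alpha/4, p_2=(\alpha/2-\beta)^2$; $q_0=1, q_1=\alpha, q_2=(\alpha-\beta)^2$; both satisfying $x_t = (\alpha-\beta)x_{t-1} - \beta(\alpha-\beta)x_{t-2} + \beta^3 x_{t-3}$. -/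
/-!
Both sides of the identity solve the same forced third-order recurrence and agree at `t = 0, 1, 2`.
For the right-hand side, `p t * L 0` solves the homogeneous recurrence, and the lagged convolution
`∑ r ∈ Ico 1 t, q (t - r - 1) * L r` picks up the forcing `L (t + 2) + β * L (t + 1)` from the
three new summands: their coefficients are `q 0 = 1`, `q 1 - (α - β) q 0 = β`, and
`q 2 - (α - β) q 1 + β (α - β) q 0 = 0`.
-/

namespace ThirdOrderRecurrence

variable {R : Type*} [CommRing R]

theorem eq_of_eq_init {a b c : R} {f x y : ℕ → R}
    (hx : ∀ t, x (t + 3) = a * x (t + 2) + b * x (t + 1) + c * x t + f t)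
    (hy : ∀ t, y (t + 3) = a * y (t + 2) + b * y (t + 1) + c * y t + f t)
    (h0 : x 0 = y 0) (h1 : x 1 = y 1) (h2 : x 2 = y 2) : x = y := by
  funext t
  induction t using Nat.strong_induction_on with
  | _ t ih =>
    match t with
    | 0 => exact h0
    | 1 => exact h1
    | 2 => exact h2
    | t + 3 => rw [hx, hy, ih t (by omega), ih (t + 1) (by omega), ih (t + 2) (by omega)]

def lagConv (q L : ℕ → R) (t : ℕ) : R :=
  ∑ r ∈ Finset.Ico 1 t, q (t - r - 1) * L r

theorem lagConv_add_three {a b c : R} {q : ℕ → R} (L : ℕ → R)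
    (hq : ∀ t, q (t + 3) = a * q (t + 2) + b * q (t + 1) + c * q t)
    (hq2 : q 2 = a * q 1 + b * q 0) (t : ℕ) :
    lagConv q L (t + 3) = a * lagConv q L (t + 2) + b * lagConv q L (t + 1) + c * lagConv q L t
      + (q 0 * L (t + 2) + (q 1 - a * q 0) * L (t + 1)) := by
  unfold lagConv
  rcases t with _ | s
  · simp only [Finset.sum_Ico_succ_top, Finset.Ico_self, Finset.sum_empty,
      Finset.Ico_eq_empty_of_le (Nat.zero_le 1), Nat.reduceSub, Nat.one_le_ofNat, le_refl,
      zero_add, mul_zero, add_zero]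
    ring
  have bulk : ∀ r ∈ Finset.Ico 1 (s + 1), q (s + 1 + 3 - r - 1) * L r =
      a * (q (s + 1 + 2 - r - 1) * L r) + b * (q (s + 1 + 1 - r - 1) * L r)
        + c * (q (s + 1 - r - 1) * L r) := by
    intro r hr
    rw [Finset.mem_Ico] at hr
    rw [show s + 1 + 3 - r - 1 = s - r + 3 by omega, show s + 1 + 2 - r - 1 = s - r + 2 by omega,
      show s + 1 + 1 - r - 1 = s - r + 1 by omega, show s + 1 - r - 1 = s - r by omega, hq]
    ring
  simp only [Finset.sum_Ico_succ_top (show 1 ≤ s + 1 by omega),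
    Finset.sum_Ico_succ_top (show 1 ≤ s + 1 + 1 by omega),
    Finset.sum_Ico_succ_top (show 1 ≤ s + 1 + 2 by omega), Finset.sum_congr rfl bulk,
    Finset.sum_add_distrib, ← Finset.mul_sum]
  rw [show s + 1 + 3 - (s + 1) - 1 = 2 by omega, show s + 1 + 3 - (s + 1 + 1) - 1 = 1 by omega,
    show s + 1 + 3 - (s + 1 + 2) - 1 = 0 by omega, show s + 1 + 2 - (s + 1) - 1 = 1 by omega,
    show s + 1 + 2 - (s + 1 + 1) - 1 = 0 by omega, show s + 1 + 1 - (s + 1) - 1 = 0 by omega, hq2]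
  ring

end ThirdOrderRecurrence

open ThirdOrderRecurrence in
theorem stmt_10 (α β : ℝ) (L : ℕ → ℝ)
    (p q : ℕ → ℝ)
    (hp0 : p 0 = 1) (hp1 : p 1 = α / 4) (hp2 : p 2 = (α / 2 - β) ^ 2)
    (hprec : ∀ t, p (t + 3) =
      (α - β) * p (t + 2) - β * (α - β) * p (t + 1) + β ^ 3 * p t)
    (hq0 : q 0 = 1) (hq1 : q 1 = α) (hq2 : q 2 = (α - β) ^ 2)
    (hqrec : ∀ t, q (t + 3) =
      (α - β) * q (t + 2) - β * (α - β) * q (t + 1) + β ^ 3 * q t)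
    (w : ℕ → ℝ)
    (hw0 : w 0 = L 0) (hw1 : w 1 = (α / 4) * L 0)
    (hw2 : w 2 = (α / 2 - β) ^ 2 * L 0 + L 1)
    (hwrec : ∀ t, w (t + 3) =
      (α - β) * w (t + 2) - β * (α - β) * w (t + 1) + β ^ 3 * w t
        + L (t + 2) + β * L (t + 1)) :
    ∀ t, 1 ≤ t → w t = p t * L 0 + ∑ r ∈ Finset.Ico 1 t, q (t - r - 1) * L r := by
  have hqrec' : ∀ t, q (t + 3) =
      (α - β) * q (t + 2) + -(β * (α - β)) * q (t + 1) + β ^ 3 * q t := fun t => by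
    rw [hqrec]; ring
  have hconv := lagConv_add_three L hqrec' (by rw [hq0, hq1, hq2]; ring)
  have hw : w = fun t => p t * L 0 + lagConv q L t := by
    refine eq_of_eq_init (a := α - β) (b := -(β * (α - β))) (c := β ^ 3)
      (f := fun t => L (t + 2) + β * L (t + 1)) (fun t => by rw [hwrec]; ring)
      (fun t => ?_) ?_ ?_ ?_
    · simp only [hconv, hprec, hq0, hq1]
      ring
    all_goals simp [lagConv, hw0, hw1, hw2, hp0, hp1, hp2, hq0]
  intro t _
  rw [hw]
  rfl
end

section
/- Fix an integer $m \geq 1$, reals $\lambda_1 > \lambda_2 \geq 0$. Define $h(\gamma) = (\sqrt{\gamma}+\sqrt{\gamma-4})^m + (\sqrt{\gamma}-\sqrt{\gamma-4})^m$ for $\gamma \geq 4$ and $g(\eta) = (2^{m+1}/h(\gamma(\eta)))^2$ with $\gamma(\eta) = 4(1-\eta+\eta\lambda_1)^2/(1-\eta+\eta\lambda_2)^2$. Then $g(0) = 1$ and $g'(\eta) < 0$ for all $\eta \in (0,1]$ (so $g$ is strictly decreasing on $(0,1]$). -/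
theorem stmt_14 (m : ℕ) (hm : 1 ≤ m) (lam1 lam2 : ℝ) (h12 : lam2 < lam1) (h2 : 0 ≤ lam2)
    (hpos : ∀ η ∈ Set.Icc (0 : ℝ) 1, 0 < 1 - η + η * lam2)
    (h : ℝ → ℝ)
    (hh : h = fun γ =>
      (Real.sqrt γ + Real.sqrt (γ - 4)) ^ m + (Real.sqrt γ - Real.sqrt (γ - 4)) ^ m)
    (γ : ℝ → ℝ)
    (hγ : γ = fun η => 4 * (1 - η + η * lam1) ^ 2 / (1 - η + η * lam2) ^ 2)
    (g : ℝ → ℝ)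
    (hg : g = fun η => ((2 : ℝ) ^ (m + 1) / h (γ η)) ^ 2) :
    g 0 = 1 ∧ ∀ η ∈ Set.Ioc (0 : ℝ) 1, deriv g η < 0 := by
  subst hh hγ hg
  constructor
  · have hs4 : Real.sqrt 4 = 2 := by
      rw [show (4:ℝ) = 2^2 by norm_num, Real.sqrt_sq (by norm_num)]
    simp only
    norm_num [hs4, pow_succ]
    rw [show (2:ℝ)^m + 2^m = 2^m*2 by ring, div_self (by positivity)]; ring
  · intro η hη
    obtain ⟨hη0, hη1⟩ := hη
    have hb : 0 < 1 - η + η * lam2 := hpos η ⟨le_of_lt hη0, hη1⟩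
    set a := 1 - η + η * lam1 with ha_def
    set b := 1 - η + η * lam2 with hb_def
    have hba : b < a := by
      rw [ha_def, hb_def]; nlinarith
    have ha : 0 < a := hb.trans hba
    -- derivative of γ
    have hA : HasDerivAt (fun x : ℝ => 1 - x + x * lam1) (-1 + lam1) η := by
      exact (((hasDerivAt_const η (1:ℝ)).sub (hasDerivAt_id η)).add
        ((hasDerivAt_id η).mul_const lam1)).congr_deriv (by ring)
    have hB : HasDerivAt (fun x : ℝ => 1 - x + x * lam2) (-1 + lam2) η := by
      exact (((hasDerivAt_const η (1:ℝ)).sub (hasDerivAt_id η)).add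
        ((hasDerivAt_id η).mul_const lam2)).congr_deriv (by ring)
    have hN : HasDerivAt (fun x : ℝ => 4 * (1 - x + x * lam1) ^ 2)
        (4 * (2 * a ^ 1 * (-1 + lam1))) η := (hA.pow 2).const_mul 4
    have hD : HasDerivAt (fun x : ℝ => (1 - x + x * lam2) ^ 2)
        (2 * b ^ 1 * (-1 + lam2)) η := hB.pow 2
    set γd : ℝ := 8 * a * (lam1 - lam2) / b ^ 3 with hγd_def
    have hγ' : HasDerivAt (fun x : ℝ => 4 * (1 - x + x * lam1) ^ 2 / (1 - x + x * lam2) ^ 2)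
        γd η := by
      have := hN.div hD (by positivity)
      refine this.congr_deriv ?_
      rw [hγd_def, ha_def, hb_def]
      field_simp
      ring
    have hγd_pos : 0 < γd := by
      rw [hγd_def]
      have : 0 < lam1 - lam2 := by linarith
      positivity
    -- point x = γ η
    set x : ℝ := 4 * a ^ 2 / b ^ 2 with hx_def
    have hx4 : 4 < x := by
      rw [hx_def, lt_div_iff₀ (by positivity)]
      nlinarith
    have hx0 : 0 < x := by linarith
    set s := Real.sqrt x with hs_def
    set t := Real.sqrt (x - 4) with ht_def
    have hs0 : 0 < s := Real.sqrt_pos.mpr hx0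
    have ht0 : 0 < t := Real.sqrt_pos.mpr (by linarith)
    have hts : t < s := by
      rw [hs_def, ht_def]
      exact Real.sqrt_lt_sqrt (by linarith) (by linarith)
    -- derivative of h at x
    have hsd : HasDerivAt Real.sqrt (1 / (2 * s)) x := Real.hasDerivAt_sqrt hx0.ne'
    have htd : HasDerivAt (fun y : ℝ => Real.sqrt (y - 4)) (1 / (2 * t)) x := by
      have := (Real.hasDerivAt_sqrt (show x - 4 ≠ 0 by intro hc; linarith)).comp x
        ((hasDerivAt_id x).sub_const 4)
      exact this.congr_deriv (mul_one _)
    have hhd0 : HasDerivAt (fun y : ℝ =>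
        (Real.sqrt y + Real.sqrt (y - 4)) ^ m + (Real.sqrt y - Real.sqrt (y - 4)) ^ m)
        ((m : ℝ) * (s + t) ^ (m - 1) * (1 / (2 * s) + 1 / (2 * t)) +
          (m : ℝ) * (s - t) ^ (m - 1) * (1 / (2 * s) - 1 / (2 * t))) x :=
      ((hsd.add htd).pow m).add ((hsd.sub htd).pow m)
    obtain ⟨k, rfl⟩ : ∃ k, m = k + 1 := ⟨m - 1, (Nat.succ_pred_eq_of_pos hm).symm⟩
    set hd : ℝ := (k + 1 : ℝ) * ((s + t) ^ (k + 1) - (s - t) ^ (k + 1)) / (2 * s * t)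
      with hhd_def
    have hd_eq : ((k + 1 : ℕ) : ℝ) * (s + t) ^ (k + 1 - 1) * (1 / (2 * s) + 1 / (2 * t)) +
        ((k + 1 : ℕ) : ℝ) * (s - t) ^ (k + 1 - 1) * (1 / (2 * s) - 1 / (2 * t)) = hd := by
      rw [hhd_def]
      simp only [Nat.add_sub_cancel, Nat.cast_add, Nat.cast_one]
      field_simp
      ring
    have hhd : HasDerivAt (fun y : ℝ =>
        (Real.sqrt y + Real.sqrt (y - 4)) ^ (k + 1) + (Real.sqrt y - Real.sqrt (y - 4)) ^ (k + 1))
        hd x := hd_eq ▸ hhd0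
    have hd_pos : 0 < hd := by
      rw [hhd_def]
      have hlt : (s - t) ^ (k + 1) < (s + t) ^ (k + 1) :=
        pow_lt_pow_left₀ (by linarith) (by linarith) (Nat.succ_ne_zero k)
      have : 0 < (s + t) ^ (k + 1) - (s - t) ^ (k + 1) := by linarith
      positivity
    -- value of h at x
    have hHpos : 0 < (s + t) ^ (k + 1) + (s - t) ^ (k + 1) := by
      have h1 : 0 < (s + t) ^ (k + 1) := by positivity
      have h2 : 0 ≤ (s - t) ^ (k + 1) := pow_nonneg (by linarith) _
      linarith
    -- composition
    have hγη : (fun x : ℝ => 4 * (1 - x + x * lam1) ^ 2 / (1 - x + x * lam2) ^ 2) η = x := rfl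
    have hH : HasDerivAt (fun y : ℝ =>
        (Real.sqrt ((fun x : ℝ => 4 * (1 - x + x * lam1) ^ 2 / (1 - x + x * lam2) ^ 2) y) +
          Real.sqrt ((fun x : ℝ => 4 * (1 - x + x * lam1) ^ 2 / (1 - x + x * lam2) ^ 2) y - 4)) ^ (k + 1) +
        (Real.sqrt ((fun x : ℝ => 4 * (1 - x + x * lam1) ^ 2 / (1 - x + x * lam2) ^ 2) y) -
          Real.sqrt ((fun x : ℝ => 4 * (1 - x + x * lam1) ^ 2 / (1 - x + x * lam2) ^ 2) y - 4)) ^ (k + 1))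
        (hd * γd) η := by have := hhd.comp η hγ'; exact this
    have hg' : HasDerivAt (fun y : ℝ =>
        ((2:ℝ) ^ (k + 1 + 1) /
          ((Real.sqrt (4 * (1 - y + y * lam1) ^ 2 / (1 - y + y * lam2) ^ 2) +
            Real.sqrt (4 * (1 - y + y * lam1) ^ 2 / (1 - y + y * lam2) ^ 2 - 4)) ^ (k + 1) +
          (Real.sqrt (4 * (1 - y + y * lam1) ^ 2 / (1 - y + y * lam2) ^ 2) -
            Real.sqrt (4 * (1 - y + y * lam1) ^ 2 / (1 - y + y * lam2) ^ 2 - 4)) ^ (k + 1))) ^ 2)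
        (2 * ((2:ℝ) ^ (k + 1 + 1) / ((s + t) ^ (k + 1) + (s - t) ^ (k + 1))) ^ 1 *
          ((0 * ((s + t) ^ (k + 1) + (s - t) ^ (k + 1)) - (2:ℝ) ^ (k + 1 + 1) * (hd * γd)) /
            ((s + t) ^ (k + 1) + (s - t) ^ (k + 1)) ^ 2)) η :=
      ((hasDerivAt_const η ((2:ℝ) ^ (k + 1 + 1))).div hH hHpos.ne').pow 2
    rw [hg'.deriv]
    have hc : (0:ℝ) < (2:ℝ) ^ (k + 1 + 1) := by positivity
    have hnum : 0 * ((s + t) ^ (k + 1) + (s - t) ^ (k + 1)) - (2:ℝ) ^ (k + 1 + 1) * (hd * γd) < 0 := by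
      have : 0 < (2:ℝ) ^ (k + 1 + 1) * (hd * γd) := by positivity
      linarith
    have hfrac : (0 * ((s + t) ^ (k + 1) + (s - t) ^ (k + 1)) - (2:ℝ) ^ (k + 1 + 1) * (hd * γd)) /
        ((s + t) ^ (k + 1) + (s - t) ^ (k + 1)) ^ 2 < 0 :=
      div_neg_of_neg_of_pos hnum (by positivity)
    exact mul_neg_of_pos_of_neg (by positivity) hfrac
end

section
/- With $g$ as above ($g(\eta) = (2^{m+1}/h(\gamma(\eta)))^2$, $\gamma(\eta) = 4(1-\eta+\eta\lambda_1)^2/(1-\eta+\eta\lambda_2)^2$, $\lambda_1 > \lambda_2 \geq 0$, integer $m \geq 1$), the derivative of $g$ at $\eta = 0$ equals $g'(0) = -2 m^2 (\lambda_1 - \lambda_2)$. -/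
noncomputable def cheb : ℕ → ℝ → ℝ
  | 0 => fun _ => 1
  | 1 => fun x => x
  | (n+2) => fun x => 2 * x * cheb (n+1) x - cheb n x

lemma cheb_eval (u : ℝ) (hu : 1 ≤ u) :
    ∀ n : ℕ, (u + Real.sqrt (u^2-1))^n + (u - Real.sqrt (u^2-1))^n = 2 * cheb n u := by
  have hs : Real.sqrt (u^2-1) ^ 2 = u^2 - 1 := by
    rw [Real.sq_sqrt]; nlinarith
  have key : ∀ n : ℕ,
      ((u + Real.sqrt (u^2-1))^n + (u - Real.sqrt (u^2-1))^n = 2 * cheb n u) ∧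
      ((u + Real.sqrt (u^2-1))^(n+1) + (u - Real.sqrt (u^2-1))^(n+1) = 2 * cheb (n+1) u) := by
    intro n
    induction n with
    | zero =>
      refine ⟨by norm_num [cheb], by simp only [cheb, pow_one]; ring⟩
    | succ k ih =>
      refine ⟨ih.2, ?_⟩
      have h1 := ih.1
      have h2 := ih.2
      set s := Real.sqrt (u^2-1) with hsdef
      have hab : (u + s) * (u - s) = 1 := by nlinarith [hs]
      have expand : (u+s)^(k+1+1) + (u-s)^(k+1+1)
          = (2*u) * ((u+s)^(k+1) + (u-s)^(k+1)) - ((u+s)*(u-s)) * ((u+s)^k + (u-s)^k) := by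
        ring
      show _ = 2 * cheb (k+2) u
      simp only [cheb]
      rw [expand, hab, h1, h2]
      ring
  exact fun n => (key n).1

lemma cheb_one_deriv : ∀ n : ℕ, cheb n 1 = 1 ∧ HasDerivAt (cheb n) ((n:ℝ)^2) 1 := by
  have key : ∀ n : ℕ,
      (cheb n 1 = 1 ∧ HasDerivAt (cheb n) ((n:ℝ)^2) 1) ∧
      (cheb (n+1) 1 = 1 ∧ HasDerivAt (cheb (n+1)) (((n:ℝ)+1)^2) 1) := by
    intro n
    induction n with
    | zero =>
      refine ⟨⟨rfl, ?_⟩, rfl, ?_⟩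
      · show HasDerivAt (fun _ => (1:ℝ)) _ 1
        simpa using (hasDerivAt_const (1:ℝ) (1:ℝ))
      · show HasDerivAt (fun x : ℝ => x) _ 1
        simpa using (hasDerivAt_id' (1:ℝ))
    | succ k ih =>
      obtain ⟨⟨hv0, hd0⟩, hv1, hd1⟩ := ih
      refine ⟨⟨hv1, by push_cast; exact hd1⟩, ?_, ?_⟩
      · show cheb (k+2) 1 = 1
        simp only [cheb, hv0, hv1]; ring
      · show HasDerivAt (cheb (k+2)) _ 1
        have : HasDerivAt (fun x => 2 * x * cheb (k+1) x - cheb k x)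
            ((2 * cheb (k+1) 1 + 2 * 1 * ((k:ℝ)+1)^2) - (k:ℝ)^2) 1 := by
          have hmul : HasDerivAt (fun x : ℝ => 2 * x) 2 1 := by
            simpa using (hasDerivAt_id (1:ℝ)).const_mul 2
          exact (hmul.mul hd1).sub hd0
        have heq : ((2 * cheb (k+1) 1 + 2 * 1 * ((k:ℝ)+1)^2) - (k:ℝ)^2) = ((k:ℝ)+1+1)^2 := by
          rw [hv1]; ring
        rw [heq] at this
        rw [show ((((k+1:ℕ):ℝ))+1)^2 = ((k:ℝ)+1+1)^2 by push_cast; ring]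
        exact this
  intro n
  exact (key n).1

theorem stmt_15 (m : ℕ) (hm : 1 ≤ m) (lam1 lam2 : ℝ) (h12 : lam2 < lam1) (h2 : 0 ≤ lam2)
    (hpos : ∀ η ∈ Set.Icc (0 : ℝ) 1, 0 < 1 - η + η * lam2)
    (h : ℝ → ℝ)
    (hh : h = fun γ =>
      (Real.sqrt γ + Real.sqrt (γ - 4)) ^ m + (Real.sqrt γ - Real.sqrt (γ - 4)) ^ m)
    (γ : ℝ → ℝ)
    (hγ : γ = fun η => 4 * (1 - η + η * lam1) ^ 2 / (1 - η + η * lam2) ^ 2)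
    (g : ℝ → ℝ)
    (hg : g = fun η => ((2 : ℝ) ^ (m + 1) / h (γ η)) ^ 2) :
    derivWithin g (Set.Ici 0) 0 = -2 * (m : ℝ) ^ 2 * (lam1 - lam2) := by
  set u : ℝ → ℝ := fun η => (1 - η + η * lam1) / (1 - η + η * lam2) with hu_def
  set G : ℝ → ℝ := fun η => ((cheb m (u η))⁻¹)^2 with hG_def
  -- equality of g and G on Ico 0 1
  have heqon : Set.EqOn g G (Set.Ico 0 1) := by
    intro η hη
    have hη01 : η ∈ Set.Icc (0:ℝ) 1 := ⟨hη.1, le_of_lt hη.2⟩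
    have hD : 0 < 1 - η + η * lam2 := hpos η hη01
    have hN : 1 - η + η * lam2 ≤ 1 - η + η * lam1 := by nlinarith [hη.1]
    have hu1 : 1 ≤ u η := (one_le_div hD).2 hN
    have hu0 : 0 < u η := lt_of_lt_of_le one_pos hu1
    have hγη : γ η = 4 * (u η)^2 := by
      simp only [hγ, hu_def, div_pow]
      rw [mul_div_assoc]
    have hsqγ : Real.sqrt (γ η) = 2 * u η := by
      rw [hγη, show 4 * (u η)^2 = (2 * u η)^2 by ring, Real.sqrt_sq (by positivity)]
    have hsqγ4 : Real.sqrt (γ η - 4) = 2 * Real.sqrt ((u η)^2 - 1) := by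
      rw [hγη, show 4 * (u η)^2 - 4 = 2^2 * ((u η)^2 - 1) by ring,
        Real.sqrt_mul (by positivity), Real.sqrt_sq (by norm_num)]
    have hhγ : h (γ η) = 2^(m+1) * cheb m (u η) := by
      rw [hh]
      simp only
      rw [hsqγ, hsqγ4,
        show 2 * u η + 2 * Real.sqrt ((u η)^2 - 1)
          = 2 * (u η + Real.sqrt ((u η)^2 - 1)) by ring,
        show 2 * u η - 2 * Real.sqrt ((u η)^2 - 1)
          = 2 * (u η - Real.sqrt ((u η)^2 - 1)) by ring,
        mul_pow, mul_pow, ← mul_add, cheb_eval (u η) hu1 m, pow_succ]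
      ring
    rw [hg, hG_def]
    simp only
    rw [hhγ, div_mul_cancel_left₀ (by positivity : ((2:ℝ)^(m+1)) ≠ 0)]
  -- transfer derivWithin
  have hmem : Set.Ico (0:ℝ) 1 ∈ nhdsWithin 0 (Set.Ici 0) :=
    Ico_mem_nhdsGE (by norm_num)
  have hev : g =ᶠ[nhdsWithin 0 (Set.Ici 0)] G :=
    Filter.eventuallyEq_of_mem hmem heqon
  rw [hev.derivWithin_eq (heqon (by constructor <;> norm_num))]
  -- compute derivative of G
  have hu0v : u 0 = 1 := by simp [hu_def]
  have huD : HasDerivAt u (lam1 - lam2) 0 := by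
    have hN : HasDerivAt (fun η : ℝ => 1 - η + η * lam1) (lam1 - 1) 0 := by
      have := ((hasDerivAt_id (0:ℝ)).const_sub 1).add ((hasDerivAt_id (0:ℝ)).mul_const lam1)
      exact this.congr_deriv (by ring)
    have hDd : HasDerivAt (fun η : ℝ => 1 - η + η * lam2) (lam2 - 1) 0 := by
      have := ((hasDerivAt_id (0:ℝ)).const_sub 1).add ((hasDerivAt_id (0:ℝ)).mul_const lam2)
      exact this.congr_deriv (by ring)
    have hD0 : (1 - (0:ℝ) + 0 * lam2) ≠ 0 := by norm_num
    have := hN.div hDd hD0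
    exact this.congr_deriv (by norm_num)
  obtain ⟨hc1, hcd⟩ := cheb_one_deriv m
  have hP : HasDerivAt (fun η => cheb m (u η)) ((m:ℝ)^2 * (lam1 - lam2)) 0 := by
    have : HasDerivAt (cheb m) ((m:ℝ)^2) (u 0) := by rw [hu0v]; exact hcd
    exact this.comp 0 huD
  have hP0 : cheb m (u 0) = 1 := by rw [hu0v]; exact hc1
  have hPne : cheb m (u 0) ≠ 0 := by rw [hP0]; norm_num
  have hGd : HasDerivAt G (-2 * (m:ℝ)^2 * (lam1 - lam2)) 0 := by
    have hinv := hP.inv hPne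
    have := hinv.pow 2
    refine this.congr_deriv ?_
    symm
    simp only [Pi.inv_apply, hu0v, hc1]
    push_cast
    ring
  rw [(hGd.hasDerivWithinAt).derivWithin (uniqueDiffOn_Ici 0 0 (by simp))]
end

section
/- Let $C$ be a symmetric PSD $d\times d$ matrix with largest eigenpair $(\lambda_1, u_1)$, $\|u_1\|=1$, and let $w_0 \in \mathbb{R}^d$ be nonzero with $P = I - w_0 w_0^T/\|w_0\|^2$. Then $\|PC - CP\|^2 \leq 2\lambda_1^2 \sum_{k=2}^d (u_k^T w_0)^2 / \|w_0\|^2$, where $u_1,\ldots,u_d$ is an orthonormal eigenbasis of $C$. Equivalently, $\|PC-CP\|^2 \leq 2\lambda_1^2(1 - (u_1^T w_0)^2/\|w_0\|^2)$. -/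
open Matrix

lemma dotSelfNonneg {d : ℕ} (f : Fin d → ℝ) : 0 ≤ f ⬝ᵥ f :=
  Finset.sum_nonneg fun _ _ => mul_self_nonneg _

lemma dotCS {d : ℕ} (f g : Fin d → ℝ) : (f ⬝ᵥ g) ^ 2 ≤ (f ⬝ᵥ f) * (g ⬝ᵥ g) := by
  simpa [dotProduct, sq] using Finset.sum_mul_sq_le_sq_mul_sq Finset.univ f g

lemma bessel2 {d : ℕ} (w a x : Fin d → ℝ) (h : w ⬝ᵥ a = 0) :
    (w ⬝ᵥ x) ^ 2 * (a ⬝ᵥ a) + (a ⬝ᵥ x) ^ 2 * (w ⬝ᵥ w) ≤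
      (a ⬝ᵥ a) * ((w ⬝ᵥ w) * (x ⬝ᵥ x)) := by
  set m := a ⬝ᵥ a with hm
  set n := w ⬝ᵥ w with hn
  set β := w ⬝ᵥ x with hβ
  set γ := a ⬝ᵥ x with hγ
  have haw : a ⬝ᵥ w = 0 := by rwa [dotProduct_comm]
  set z : Fin d → ℝ := (β * m) • w + (γ * n) • a with hz
  have hxz : x ⬝ᵥ z = β ^ 2 * m + γ ^ 2 * n := by
    simp only [hz, dotProduct_add, dotProduct_smul, smul_eq_mul]
    rw [dotProduct_comm x w, dotProduct_comm x a, ← hβ, ← hγ]; ring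
  have hzz : z ⬝ᵥ z = m * n * (β ^ 2 * m + γ ^ 2 * n) := by
    simp only [hz, dotProduct_add, add_dotProduct, dotProduct_smul, smul_dotProduct,
      smul_eq_mul, h, haw, ← hm, ← hn]
    ring
  have hcs := dotCS x z
  rw [hxz, hzz] at hcs
  have hm0 : 0 ≤ m := dotSelfNonneg a
  have hn0 : 0 ≤ n := dotSelfNonneg w
  have hx0 : 0 ≤ x ⬝ᵥ x := dotSelfNonneg x
  have hT0 : 0 ≤ β ^ 2 * m + γ ^ 2 * n := by positivity
  rcases hT0.eq_or_lt with hT | hT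
  · rw [← hT]; positivity
  · nlinarith [hcs, hT]

lemma euclidNormSq {d : ℕ} (v : Fin d → ℝ) :
    ‖(WithLp.equiv 2 (Fin d → ℝ)).symm v‖ ^ 2 = v ⬝ᵥ v := by
  rw [EuclideanSpace.norm_eq, Real.sq_sqrt (by positivity)]
  simp [dotProduct, sq]

theorem stmt_18 {d : ℕ} (hd : 0 < d)
    (C : Matrix (Fin d) (Fin d) ℝ) (hC : C.IsSymm) (hCpsd : C.PosSemidef)
    (μ : Fin d → ℝ) (u : Fin d → Fin d → ℝ)
    (hortho : ∀ i j, u i ⬝ᵥ u j = if i = j then (1 : ℝ) else 0)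
    (heig : ∀ k, C.mulVec (u k) = μ k • u k)
    (lam1 : ℝ) (hlam1 : lam1 = μ ⟨0, hd⟩) (hmax : ∀ k, μ k ≤ lam1)
    (w0 : Fin d → ℝ) (hw0 : w0 ≠ 0)
    (P : Matrix (Fin d) (Fin d) ℝ)
    (hP : P = 1 - (1 / (w0 ⬝ᵥ w0)) • Matrix.vecMulVec w0 w0) :
    specNorm (P * C - C * P) ^ 2 ≤
      2 * lam1 ^ 2 * ((∑ k ∈ Finset.univ.erase ⟨0, hd⟩, (u k ⬝ᵥ w0) ^ 2) / (w0 ⬝ᵥ w0)) ∧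
    specNorm (P * C - C * P) ^ 2 ≤
      2 * lam1 ^ 2 * (1 - (u ⟨0, hd⟩ ⬝ᵥ w0) ^ 2 / (w0 ⬝ᵥ w0)) := by
  classical
  set k0 : Fin d := ⟨0, hd⟩
  set n2 : ℝ := w0 ⬝ᵥ w0 with hn2def
  have hn2pos : 0 < n2 := by
    rcases (dotSelfNonneg w0).eq_or_lt with h | h
    · exact absurd (dotProduct_self_eq_zero.mp h.symm) hw0
    · exact h
  have hn2ne : n2 ≠ 0 := ne_of_gt hn2pos
  set a : Fin d → ℝ := C *ᵥ w0 with ha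
  set c : ℝ := (w0 ⬝ᵥ a) / n2 with hc
  set a' : Fin d → ℝ := a - c • w0 with ha'
  set m2 : ℝ := a' ⬝ᵥ a' with hm2def
  have hm2nn : 0 ≤ m2 := dotSelfNonneg a'
  -- symmetry facts
  have hsym : ∀ v : Fin d → ℝ, w0 ⬝ᵥ (C *ᵥ v) = a ⬝ᵥ v := by
    intro v
    rw [Matrix.dotProduct_mulVec]
    conv_lhs => rw [show C = Cᵀ from hC.symm, Matrix.vecMul_transpose]
  have heu : ∀ (k : Fin d) (v : Fin d → ℝ), u k ⬝ᵥ (C *ᵥ v) = μ k * (u k ⬝ᵥ v) := by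
    intro k v
    rw [Matrix.dotProduct_mulVec]
    conv_lhs => rw [show C = Cᵀ from hC.symm, Matrix.vecMul_transpose, heig k]
    rw [smul_dotProduct, smul_eq_mul]
  have hw0a' : w0 ⬝ᵥ a' = 0 := by
    rw [ha', dotProduct_sub, dotProduct_smul, smul_eq_mul, ← hn2def, hc,
      div_mul_cancel₀ _ hn2ne, sub_self]
  -- Parseval
  set U : Matrix (Fin d) (Fin d) ℝ := Matrix.of u with hU
  have hUU : Uᵀ * U = 1 := by
    rw [mul_eq_one_comm]
    ext i j
    simpa [hU, Matrix.mul_apply, dotProduct, Matrix.one_apply] using hortho i j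
  have hpar : ∀ v y : Fin d → ℝ, (∑ k, (u k ⬝ᵥ v) * (u k ⬝ᵥ y)) = v ⬝ᵥ y := by
    intro v y
    have h1 : (U *ᵥ v) ⬝ᵥ (U *ᵥ y) = v ⬝ᵥ y := by
      rw [Matrix.dotProduct_mulVec, Matrix.vecMul_mulVec, hUU, Matrix.vecMul_one]
    exact h1
  set α : Fin d → ℝ := fun k => u k ⬝ᵥ w0 with hα
  have hn2eq : n2 = ∑ k, α k ^ 2 := by
    rw [hn2def, ← hpar w0 w0]; exact Finset.sum_congr rfl fun k _ => (sq (α k)).symm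
  have hka : ∀ k, u k ⬝ᵥ a = μ k * α k := fun k => heu k w0
  have hw0a : w0 ⬝ᵥ a = ∑ k, μ k * α k ^ 2 := by
    rw [← hpar w0 a]
    exact Finset.sum_congr rfl fun k _ => by rw [hka k]; ring
  have hka' : ∀ k, u k ⬝ᵥ a' = (μ k - c) * α k := by
    intro k
    rw [ha', dotProduct_sub, dotProduct_smul, smul_eq_mul, hka k]
    ring
  have hm2eq : m2 = ∑ k, ((μ k - c) * α k) ^ 2 := by
    rw [hm2def, ← hpar a' a']
    exact Finset.sum_congr rfl fun k _ => by rw [hka' k]; ring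
  -- eigenvalue bounds
  have hμnn : ∀ k, 0 ≤ μ k := by
    intro k
    have h := hCpsd.dotProduct_mulVec_nonneg (u k)
    have hsk : star (u k) = u k := by
      funext i; exact star_trivial _
    rw [hsk, heig k, dotProduct_smul, hortho k k, if_pos rfl, smul_eq_mul, mul_one] at h
    exact h
  have hlamnn : 0 ≤ lam1 := hlam1 ▸ hμnn k0
  set S : ℝ := ∑ k ∈ Finset.univ.erase k0, α k ^ 2 with hS
  have hsplit : α k0 ^ 2 + S = n2 := by
    rw [hn2eq, hS]
    exact Finset.add_sum_erase Finset.univ (fun k => α k ^ 2) (Finset.mem_univ k0)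
  have hSnn : 0 ≤ S := Finset.sum_nonneg fun _ _ => sq_nonneg _
  have hα0le : α k0 ^ 2 ≤ n2 := by linarith
  have hSle : S ≤ n2 := by nlinarith [sq_nonneg (α k0)]
  have hcn2 : c * n2 = w0 ⬝ᵥ a := div_mul_cancel₀ _ hn2ne
  have hcnn : 0 ≤ c := by
    rw [hc]
    apply div_nonneg _ (le_of_lt hn2pos)
    rw [hw0a]
    exact Finset.sum_nonneg fun k _ => mul_nonneg (hμnn k) (sq_nonneg _)
  have hcle : c ≤ lam1 := by
    have h1 : c * n2 ≤ lam1 * n2 := by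
      rw [hcn2, hw0a, hn2eq, Finset.mul_sum]
      exact Finset.sum_le_sum fun k _ => mul_le_mul_of_nonneg_right (hmax k) (sq_nonneg _)
    exact le_of_mul_le_mul_right h1 hn2pos
  have hclam0 : lam1 * α k0 ^ 2 ≤ c * n2 := by
    rw [hcn2, hw0a, hlam1]
    exact Finset.single_le_sum (f := fun k => μ k * α k ^ 2)
      (fun k _ => mul_nonneg (hμnn k) (sq_nonneg _)) (Finset.mem_univ k0)
  -- key bound : m2 ≤ 2 lam1^2 S
  have hkey : m2 ≤ 2 * lam1 ^ 2 * S := by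
    have hsum : m2 = ((μ k0 - c) * α k0) ^ 2
        + ∑ k ∈ Finset.univ.erase k0, ((μ k - c) * α k) ^ 2 := by
      rw [hm2eq, ← Finset.add_sum_erase Finset.univ (fun k => ((μ k - c) * α k) ^ 2) (Finset.mem_univ k0)]
    have hrest : ∑ k ∈ Finset.univ.erase k0, ((μ k - c) * α k) ^ 2 ≤ lam1 ^ 2 * S := by
      rw [hS, Finset.mul_sum]
      apply Finset.sum_le_sum
      intro k _
      have h1 : (μ k - c) ^ 2 ≤ lam1 ^ 2 := by nlinarith [hμnn k, hmax k, hcle, hcnn]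
      calc ((μ k - c) * α k) ^ 2 = (μ k - c) ^ 2 * α k ^ 2 := by ring
        _ ≤ lam1 ^ 2 * α k ^ 2 := mul_le_mul_of_nonneg_right h1 (sq_nonneg _)
    have hfirst : ((μ k0 - c) * α k0) ^ 2 ≤ lam1 ^ 2 * S := by
      rw [← hlam1]
      have e1 : lam1 * α k0 ^ 2 + lam1 * S = lam1 * n2 := by rw [← hsplit]; ring
      have h1 : (lam1 - c) * n2 ≤ lam1 * S := by
        have e2 : (lam1 - c) * n2 = lam1 * n2 - c * n2 := by ring
        linarith [hclam0, e1, e2]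
      have h2 : 0 ≤ lam1 - c := by linarith
      have h3 : ((lam1 - c) * n2) ^ 2 ≤ (lam1 * S) ^ 2 :=
        pow_le_pow_left₀ (mul_nonneg h2 hn2pos.le) h1 2
      have h4 : S * α k0 ^ 2 ≤ n2 * n2 := mul_le_mul hSle hα0le (sq_nonneg _) hn2pos.le
      have h5 : ((lam1 - c) * α k0) ^ 2 * n2 ^ 2 ≤ lam1 ^ 2 * S * n2 ^ 2 := by
        calc ((lam1 - c) * α k0) ^ 2 * n2 ^ 2 = ((lam1 - c) * n2) ^ 2 * α k0 ^ 2 := by ring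
          _ ≤ (lam1 * S) ^ 2 * α k0 ^ 2 := mul_le_mul_of_nonneg_right h3 (sq_nonneg _)
          _ = lam1 ^ 2 * S * (S * α k0 ^ 2) := by ring
          _ ≤ lam1 ^ 2 * S * (n2 * n2) :=
              mul_le_mul_of_nonneg_left h4 (mul_nonneg (by positivity) hSnn)
          _ = lam1 ^ 2 * S * n2 ^ 2 := by ring
      exact le_of_mul_le_mul_right h5 (pow_pos hn2pos 2)
    linarith [hsum, hrest, hfirst]
  -- commutator action
  have hW : ∀ y : Fin d → ℝ, Matrix.vecMulVec w0 w0 *ᵥ y = (w0 ⬝ᵥ y) • w0 := by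
    intro y
    ext i
    simp only [Matrix.mulVec, dotProduct, Matrix.vecMulVec_apply, Pi.smul_apply,
      smul_eq_mul, Finset.sum_mul]
    exact Finset.sum_congr rfl fun j _ => by ring
  set A : Matrix (Fin d) (Fin d) ℝ := P * C - C * P with hA
  have hAmul : ∀ v : Fin d → ℝ, A *ᵥ v = (1 / n2) • ((w0 ⬝ᵥ v) • a' - (a' ⬝ᵥ v) • w0) := by
    intro v
    have h1 : A *ᵥ v = P *ᵥ (C *ᵥ v) - C *ᵥ (P *ᵥ v) := by
      rw [hA, Matrix.sub_mulVec, Matrix.mulVec_mulVec, Matrix.mulVec_mulVec]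
    have hPy : ∀ y : Fin d → ℝ, P *ᵥ y = y - (1 / n2) • ((w0 ⬝ᵥ y) • w0) := by
      intro y
      rw [hP, Matrix.sub_mulVec, Matrix.one_mulVec, Matrix.smul_mulVec, hW, hn2def]
    rw [h1, hPy, hPy]
    rw [Matrix.mulVec_sub, Matrix.mulVec_smul, Matrix.mulVec_smul, ← ha, hsym v]
    have ha'v : a' ⬝ᵥ v = a ⬝ᵥ v - c * (w0 ⬝ᵥ v) := by
      rw [ha', sub_dotProduct, smul_dotProduct, smul_eq_mul]
    have ha'e : a' = a - c • w0 := ha'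
    rw [ha'v, ha'e]
    ext i
    simp only [Pi.sub_apply, Pi.smul_apply, smul_eq_mul]
    ring
  have hdotbound : ∀ v : Fin d → ℝ,
      (A *ᵥ v) ⬝ᵥ (A *ᵥ v) ≤ (m2 / n2) * (v ⬝ᵥ v) := by
    intro v
    rw [hAmul v]
    set β := w0 ⬝ᵥ v with hβ
    set γ := a' ⬝ᵥ v with hγ
    have ha'w0 : a' ⬝ᵥ w0 = 0 := by rw [dotProduct_comm]; exact hw0a'
    have hexp : ((1 / n2) • (β • a' - γ • w0)) ⬝ᵥ ((1 / n2) • (β • a' - γ • w0))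
        = (1 / n2) ^ 2 * (β ^ 2 * m2 + γ ^ 2 * n2) := by
      simp only [smul_dotProduct, dotProduct_smul, sub_dotProduct, dotProduct_sub,
        smul_eq_mul, hw0a', ha'w0, ← hm2def, ← hn2def]
      ring
    rw [hexp]
    have hb := bessel2 w0 a' v hw0a'
    rw [← hβ, ← hγ, ← hm2def, ← hn2def] at hb
    have h2 : (1 / n2) ^ 2 * (β ^ 2 * m2 + γ ^ 2 * n2)
        ≤ (1 / n2) ^ 2 * (m2 * (n2 * (v ⬝ᵥ v))) :=
      mul_le_mul_of_nonneg_left hb (by positivity)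
    calc (1 / n2) ^ 2 * (β ^ 2 * m2 + γ ^ 2 * n2)
        ≤ (1 / n2) ^ 2 * (m2 * (n2 * (v ⬝ᵥ v))) := h2
      _ = (m2 / n2) * (v ⬝ᵥ v) := by field_simp
  -- operator norm
  have hopnorm : specNorm A ≤ Real.sqrt (m2 / n2) := by
    unfold specNorm
    apply ContinuousLinearMap.opNorm_le_bound _ (Real.sqrt_nonneg _)
    intro x
    set v : Fin d → ℝ := WithLp.equiv 2 (Fin d → ℝ) x with hv
    have hxv : x = (WithLp.equiv 2 (Fin d → ℝ)).symm v := ((WithLp.equiv 2 _).symm_apply_apply x).symm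
    have happ : (Matrix.toEuclideanCLM (𝕜 := ℝ) A) x = (WithLp.equiv 2 (Fin d → ℝ)).symm (A *ᵥ v) := by
      rw [hxv]; exact Matrix.toEuclideanCLM_toLp A v
    have hnx : ‖x‖ ^ 2 = v ⬝ᵥ v := by rw [hxv, euclidNormSq]
    have hnAx : ‖(Matrix.toEuclideanCLM (𝕜 := ℝ) A) x‖ ^ 2 = (A *ᵥ v) ⬝ᵥ (A *ᵥ v) := by
      rw [happ, euclidNormSq]
    have hsq : ‖(Matrix.toEuclideanCLM (𝕜 := ℝ) A) x‖ ^ 2 ≤ (m2 / n2) * ‖x‖ ^ 2 := by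
      rw [hnAx, hnx]; exact hdotbound v
    have h1 : ‖(Matrix.toEuclideanCLM (𝕜 := ℝ) A) x‖
        = Real.sqrt (‖(Matrix.toEuclideanCLM (𝕜 := ℝ) A) x‖ ^ 2) :=
      (Real.sqrt_sq (norm_nonneg _)).symm
    rw [h1]
    calc Real.sqrt (‖(Matrix.toEuclideanCLM (𝕜 := ℝ) A) x‖ ^ 2)
        ≤ Real.sqrt ((m2 / n2) * ‖x‖ ^ 2) := Real.sqrt_le_sqrt hsq
      _ = Real.sqrt (m2 / n2) * ‖x‖ := by
          rw [Real.sqrt_mul (by positivity), Real.sqrt_sq (norm_nonneg _)]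
  have hfinal : specNorm A ^ 2 ≤ m2 / n2 := by
    have h1 : specNorm A ^ 2 ≤ Real.sqrt (m2 / n2) ^ 2 :=
      pow_le_pow_left₀ (norm_nonneg _) hopnorm 2
    rwa [Real.sq_sqrt (by positivity)] at h1
  have hmain : specNorm A ^ 2 ≤ 2 * lam1 ^ 2 * (S / n2) := by
    calc specNorm A ^ 2 ≤ m2 / n2 := hfinal
      _ ≤ (2 * lam1 ^ 2 * S) / n2 := by gcongr
      _ = 2 * lam1 ^ 2 * (S / n2) := by ring
  constructor
  · exact hmain
  · have : 1 - α k0 ^ 2 / n2 = S / n2 := by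
      field_simp
      linarith
    calc specNorm A ^ 2 ≤ 2 * lam1 ^ 2 * (S / n2) := hmain
      _ = 2 * lam1 ^ 2 * (1 - α k0 ^ 2 / n2) := by rw [this]
end
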